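/- With the notation of the previous context, if λ_{s,t} = 1 and 0 < t < α_s, then λ_{s,t+1} = p_s − |C_{p_s^{t+1}}|. -/

import Mathlib

/-- A finite set of congruences `(x, m)` covers all the integers. -/
def CoversAll (S : Finset (ℕ × ℕ)) : Prop :=
  ∀ z : ℤ, ∃ c ∈ S, (c.2 : ℤ) ∣ z - (c.1 : ℤ)

/-- The moduli appearing in `S` are pairwise distinct. -/
def DistinctModuli (S : Finset (ℕ × ℕ)) : Prop :=
  ∀ c ∈ S, ∀ c' ∈ S, c.2 = c'.2 → c = c'

/-- `L` is a covering number: there is a covering system whose moduli are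
distinct divisors of `L` greater than `1`. -/
def IsCoveringNumber (L : ℕ) : Prop :=
  ∃ S : Finset (ℕ × ℕ), CoversAll S ∧ DistinctModuli S ∧
    ∀ c ∈ S, 1 < c.2 ∧ c.2 ∣ L

/-- `L` is a primitive covering number. -/
def IsPrimitiveCoveringNumber (L : ℕ) : Prop :=
  IsCoveringNumber L ∧ ∀ d : ℕ, d ∣ L → d ≠ L → ¬ IsCoveringNumber d

/-- `Cpow C r p s t` is the set of congruences in `C` whose modulus is exactly
divisible by `p s ^ t` and not divisible by `p k` for any `s < k ≤ r`. -/
def Cpow (C : Finset (ℕ × ℕ)) (r : ℕ) (p : ℕ → ℕ) (s t : ℕ) : Finset (ℕ × ℕ) :=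
  C.filter (fun c => p s ^ t ∣ c.2 ∧ ¬ p s ^ (t + 1) ∣ c.2 ∧
    ∀ k ∈ Finset.Ioc s r, ¬ p k ∣ c.2)

/-- The union `⋃_{i<s} ⋃_{j ≤ α i} C_{p_i^j} ∪ ⋃_{j ≤ t} C_{p_s^j}`. -/
def lowerCs (C : Finset (ℕ × ℕ)) (r : ℕ) (p α : ℕ → ℕ) (s t : ℕ) :
    Finset (ℕ × ℕ) :=
  (Finset.Ico 1 s).biUnion
      (fun i => (Finset.Icc 1 (α i)).biUnion (fun j => Cpow C r p i j)) ∪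
    (Finset.Icc 1 t).biUnion (fun j => Cpow C r p s j)

/-- `lam C r p α s t` is `λ_{s,t}`: the number of
`n ∈ {1, …, p_1^{α_1} ⋯ p_{s-1}^{α_{s-1}} p_s^t}` not covered by `lowerCs`. -/
def lam (C : Finset (ℕ × ℕ)) (r : ℕ) (p α : ℕ → ℕ) (s t : ℕ) : ℕ :=
  ((Finset.Icc 1 ((∏ i ∈ Finset.Ico 1 s, p i ^ α i) * p s ^ t)).filter
    (fun n => ∀ c ∈ lowerCs C r p α s t, n % c.2 ≠ c.1 % c.2)).card


/-!
Write `M = p_1^{α_1} ⋯ p_{s-1}^{α_{s-1}} p_s^t`. Every modulus used at level `t` divides `M`, so the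
unique uncovered `n₀ ∈ [1, M]` lifts to exactly `p_s` uncovered numbers `n₀ + kM` (`k < p_s`) of
`[1, M p_s]`. A congruence of `C_{p_s^{t+1}}` covers at most one of these lifts, because its modulus
is divisible by `p_s^{t+1}`, which does not divide `kM` for `0 < k < p_s`. By minimality of `C`, it
covers some lift that no other congruence of `C` covers. So distinct congruences of
`C_{p_s^{t+1}}` remove distinct lifts, and exactly `p_s - |C_{p_s^{t+1}}|` of them survive.
-/

open Finset

-- Reducible, so that `lam` unfolds to a filter by `Avoids`.
abbrev Avoids (S : Finset (ℕ × ℕ)) (n : ℕ) : Prop := ∀ c ∈ S, ¬ n ≡ c.1 [MOD c.2]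

theorem avoids_union {S T : Finset (ℕ × ℕ)} {n : ℕ} :
    Avoids (S ∪ T) n ↔ Avoids S n ∧ Avoids T n := by
  simp only [Avoids, mem_union, or_imp, forall_and]

theorem avoids_iff_of_modEq {S : Finset (ℕ × ℕ)} {M n n' : ℕ} (hS : ∀ c ∈ S, c.2 ∣ M)
    (h : n ≡ n' [MOD M]) : Avoids S n ↔ Avoids S n' :=
  forall₂_congr fun c hc => not_congr
    ⟨((h.of_dvd (hS c hc)).symm.trans ·), ((h.of_dvd (hS c hc)).trans ·)⟩

theorem Nat.exists_mem_Icc_modEq {M : ℕ} (hM : 0 < M) (n : ℕ) :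
    ∃ m ∈ Icc 1 M, m ≡ n [MOD M] := by
  refine ⟨(n + (M - 1)) % M + 1, ?_, ?_⟩
  · have := Nat.mod_lt (n + (M - 1)) hM
    simp only [mem_Icc]
    omega
  · calc (n + (M - 1)) % M + 1 ≡ n + (M - 1) + 1 [MOD M] := (Nat.mod_modEq _ M).add_right 1
      _ = n + M := by omega
      _ ≡ n [MOD M] := Nat.add_modEq_right

theorem avoids_iff_modEq {S : Finset (ℕ × ℕ)} {M n0 : ℕ} (hM : 0 < M) (hS : ∀ c ∈ S, c.2 ∣ M)
    (h : (Icc 1 M).filter (Avoids S) = {n0}) (n : ℕ) : Avoids S n ↔ n ≡ n0 [MOD M] := by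
  have hn0 : Avoids S n0 := (mem_filter.mp (h ▸ mem_singleton_self n0)).2
  refine ⟨fun hn => ?_, fun hn => (avoids_iff_of_modEq hS hn).2 hn0⟩
  obtain ⟨m, hm, hmn⟩ := Nat.exists_mem_Icc_modEq hM n
  have hmS : m ∈ (Icc 1 M).filter (Avoids S) :=
    mem_filter.mpr ⟨hm, (avoids_iff_of_modEq hS hmn).2 hn⟩
  rw [h, mem_singleton] at hmS
  exact hmS ▸ hmn.symm

theorem filter_Icc_mul_modEq_eq_image {M n0 : ℕ} (hn0 : n0 ∈ Icc 1 M) (q : ℕ) :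
    (Icc 1 (M * q)).filter (· ≡ n0 [MOD M]) = (range q).image (fun k => n0 + k * M) := by
  rw [mem_Icc] at hn0
  ext n
  simp only [mem_filter, mem_Icc, mem_image, mem_range]
  constructor
  · rintro ⟨⟨hn1, hnq⟩, hmod⟩
    have hle : n0 ≤ n := by
      by_contra! hlt
      have := Nat.le_of_dvd (by omega) ((Nat.modEq_iff_dvd' hlt.le).mp hmod)
      omega
    obtain ⟨k, hk⟩ := (Nat.modEq_iff_dvd' hle).mp hmod.symm
    refine ⟨k, ?_, by rw [mul_comm] at hk; omega⟩
    by_contra! hqk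
    have := Nat.mul_le_mul_left M hqk
    omega
  · rintro ⟨k, hk, rfl⟩
    refine ⟨⟨by omega, ?_⟩, Nat.add_mul_mod_self_right n0 k M⟩
    nlinarith

theorem eq_of_add_mul_modEq {m M q n0 x k k' : ℕ} (hsep : ∀ d, 0 < d → d < q → ¬ m ∣ d * M)
    (hk : k < q) (hk' : k' < q) (h : n0 + k * M ≡ x [MOD m]) (h' : n0 + k' * M ≡ x [MOD m]) :
    k = k' := by
  wlog hle : k ≤ k' generalizing k k'
  · exact (this hk' hk h' h (by omega)).symm
  by_contra hne
  apply hsep (k' - k) (by omega) (by omega)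
  have hdvd := (Nat.modEq_iff_dvd' (by gcongr)).mp (h.trans h'.symm)
  rwa [Nat.add_sub_add_left, ← Nat.sub_mul] at hdvd

theorem card_filter_not_avoids_add_mul {T : Finset (ℕ × ℕ)} {M q n0 : ℕ}
    (hsep : ∀ c ∈ T, ∀ d, 0 < d → d < q → ¬ c.2 ∣ d * M)
    (hown : ∀ c ∈ T, ∃ k < q, n0 + k * M ≡ c.1 [MOD c.2] ∧
      ∀ c' ∈ T, n0 + k * M ≡ c'.1 [MOD c'.2] → c' = c) :
    ((range q).filter (fun k => ¬ Avoids T (n0 + k * M))).card = T.card := by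
  choose! kOf hkOf_lt hkOf_mod hkOf_only using hown
  refine (card_nbij kOf (fun c hc => ?_) (fun c hc c' hc' h => ?_) (fun k hk => ?_)).symm
  · simp only [coe_filter, mem_range, Set.mem_ofPred_eq]
    exact ⟨hkOf_lt c hc, fun hav => hav c hc (hkOf_mod c hc)⟩
  · exact (hkOf_only c hc c' hc' (h ▸ hkOf_mod c' hc')).symm
  · simp only [coe_filter, mem_range, Set.mem_ofPred_eq, Avoids, not_forall, not_not] at hk
    obtain ⟨hkq, c, hc, hkc⟩ := hk
    exact ⟨c, hc, eq_of_add_mul_modEq (hsep c hc) (hkOf_lt c hc) hkq (hkOf_mod c hc) hkc⟩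

theorem card_filter_avoids_union {S T : Finset (ℕ × ℕ)} {M q : ℕ} (hM : 0 < M)
    (hS : ∀ c ∈ S, c.2 ∣ M) (hT : ∀ c ∈ T, c.2 ∣ M * q) (hST : Disjoint S T)
    (hsep : ∀ c ∈ T, ∀ d, 0 < d → d < q → ¬ c.2 ∣ d * M)
    (hone : ((Icc 1 M).filter (Avoids S)).card = 1)
    (hpriv : ∀ c ∈ T, ∃ n, n ≡ c.1 [MOD c.2] ∧ ∀ c' ∈ S ∪ T, n ≡ c'.1 [MOD c'.2] → c' = c) :
    ((Icc 1 (M * q)).filter (Avoids (S ∪ T))).card = q - T.card := by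
  rcases Nat.eq_zero_or_pos q with rfl | hq
  · simp
  obtain ⟨n0, h0⟩ := card_eq_one.mp hone
  have hn0 : n0 ∈ Icc 1 M := (mem_filter.mp (h0 ▸ mem_singleton_self n0)).1
  have hlift_inj : Function.Injective fun k => n0 + k * M := fun a b h =>
    Nat.eq_of_mul_eq_mul_right hM (Nat.add_left_cancel h)
  have hS_lift : (Icc 1 (M * q)).filter (Avoids S) = (range q).image fun k => n0 + k * M := by
    rw [← filter_Icc_mul_modEq_eq_image hn0]
    exact filter_congr fun n _ => avoids_iff_modEq hM hS h0 n
  -- the private witness of `c ∈ T` is congruent modulo `M * q` to a lift covered by `c` alone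
  have hown : ∀ c ∈ T, ∃ k < q, n0 + k * M ≡ c.1 [MOD c.2] ∧
      ∀ c' ∈ T, n0 + k * M ≡ c'.1 [MOD c'.2] → c' = c := by
    intro c hc
    obtain ⟨n, hnc, hnC⟩ := hpriv c hc
    have hnS : Avoids S n := fun c' hc' hnc' =>
      disjoint_left.mp hST hc' (hnC c' (mem_union_left T hc') hnc' ▸ hc)
    obtain ⟨m, hm, hmn⟩ := Nat.exists_mem_Icc_modEq (Nat.mul_pos hM hq) n
    have hmS : m ∈ (range q).image fun k => n0 + k * M := hS_lift ▸ mem_filter.mpr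
      ⟨hm, (avoids_iff_of_modEq (fun c hc => (hS c hc).mul_right q) hmn).2 hnS⟩
    obtain ⟨k, hk, rfl⟩ := mem_image.mp hmS
    exact ⟨k, mem_range.mp hk, (hmn.of_dvd (hT c hc)).trans hnc, fun c' hc' h =>
      hnC c' (mem_union_right S hc') ((hmn.of_dvd (hT c' hc')).symm.trans h)⟩
  have hsplit : (Icc 1 (M * q)).filter (Avoids (S ∪ T)) =
      ((range q).filter fun k => Avoids T (n0 + k * M)).image fun k => n0 + k * M := by
    simp only [avoids_union]
    rw [← filter_filter, hS_lift, filter_image]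
  rw [hsplit, card_image_of_injective _ hlift_inj,
    ← card_filter_not_avoids_add_mul hsep hown]
  have := card_filter_add_card_filter_not (s := range q) fun k => Avoids T (n0 + k * M)
  rw [card_range] at this
  omega

theorem Nat.dvd_mul_pow_of_not_pow_succ_dvd {n Q p a j : ℕ} (hp : p.Prime) (hn : n ≠ 0)
    (hdvd : n ∣ Q * p ^ a) (hj : ¬ p ^ (j + 1) ∣ n) : n ∣ Q * p ^ j := by
  have hv : n.factorization p ≤ j := by
    by_contra! h
    exact hj ((pow_dvd_pow p h).trans (Nat.ordProj_dvd n p))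
  have hu : ordCompl[p] n ∣ Q :=
    (Nat.Coprime.pow_right a (Nat.coprime_ordCompl hp hn).symm).dvd_of_dvd_mul_right
      ((Nat.ordCompl_dvd n p).trans hdvd)
  rw [← Nat.ordProj_mul_ordCompl_eq_self n p, mul_comm]
  exact mul_dvd_mul hu (pow_dvd_pow p hv)

theorem Nat.Prime.not_dvd_mul_of_pow_succ_dvd {p P m t d : ℕ} (hp : p.Prime) (hP : ¬ p ∣ P)
    (hm : p ^ (t + 1) ∣ m) (hd0 : 0 < d) (hdp : d < p) : ¬ m ∣ d * (P * p ^ t) := by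
  intro h
  have hdvd : p ^ t * p ∣ p ^ t * (d * P) := by
    rw [← pow_succ]
    exact hm.trans (h.trans (dvd_of_eq (by ring)))
  rcases hp.dvd_mul.mp ((mul_dvd_mul_iff_left (pow_ne_zero t hp.ne_zero)).mp hdvd) with hd | hd
  · exact absurd (Nat.le_of_dvd hd0 hd) (not_le.mpr hdp)
  · exact hP hd

theorem CoversAll.exists_private {C : Finset (ℕ × ℕ)} (hcov : CoversAll C)
    (hmin : ∀ D ⊂ C, ¬ CoversAll D) (hpos : ∀ c ∈ C, 0 < c.2) {c : ℕ × ℕ} (hc : c ∈ C) :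
    ∃ n : ℕ, n ≡ c.1 [MOD c.2] ∧ ∀ c' ∈ C, n ≡ c'.1 [MOD c'.2] → c' = c := by
  obtain ⟨z, hz⟩ : ∃ z : ℤ, ∀ c' ∈ C.erase c, ¬ (c'.2 : ℤ) ∣ z - c'.1 := by
    simpa [CoversAll] using hmin _ (erase_ssubset hc)
  have hK : (0 : ℤ) < ∏ c ∈ C, (c.2 : ℤ) := prod_pos fun c hc => by exact_mod_cast hpos c hc
  -- reducing `z` modulo the product of all moduli keeps the congruences it satisfies
  have hcovers : ∀ c' ∈ C, (z % ∏ c ∈ C, (c.2 : ℤ)).toNat ≡ c'.1 [MOD c'.2] ↔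
      (c'.2 : ℤ) ∣ z - c'.1 := by
    intro c' hc'
    rw [Nat.ModEq.comm, ← Int.natCast_modEq_iff, Int.toNat_of_nonneg (Int.emod_nonneg _ hK.ne'),
      ← Int.modEq_iff_dvd]
    have hzK : z % ∏ c ∈ C, (c.2 : ℤ) ≡ z [ZMOD c'.2] :=
      Int.emod_emod_of_dvd z (dvd_prod_of_mem _ hc')
    exact ⟨(·.trans hzK), (·.trans hzK.symm)⟩
  have honly : ∀ c' ∈ C, (c'.2 : ℤ) ∣ z - c'.1 → c' = c := fun c' hc' h =>
    by_contra fun hne => hz c' (mem_erase.mpr ⟨hne, hc'⟩) h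
  obtain ⟨c₀, hc₀, hzc₀⟩ := hcov z
  refine ⟨_, (hcovers c hc).2 (honly c₀ hc₀ hzc₀ ▸ hzc₀), fun c' hc' h => ?_⟩
  exact honly c' hc' ((hcovers c' hc').1 h)

section Layers

variable {C : Finset (ℕ × ℕ)} {r : ℕ} {p α : ℕ → ℕ} {s t : ℕ}

theorem lowerCs_subset : lowerCs C r p α s t ⊆ C :=
  union_subset (biUnion_subset.2 fun _ _ => biUnion_subset.2 fun _ _ => filter_subset _ _)
    (biUnion_subset.2 fun _ _ => filter_subset _ _)

theorem lowerCs_succ :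
    lowerCs C r p α s (t + 1) = lowerCs C r p α s t ∪ Cpow C r p s (t + 1) := by
  rw [lowerCs, lowerCs, ← insert_Icc_right_eq_Icc_add_one (by omega), biUnion_insert,
    union_left_comm, union_comm (Cpow C r p s (t + 1)), union_assoc]

theorem disjoint_lowerCs_Cpow_succ (hsr : s ≤ r) :
    Disjoint (lowerCs C r p α s t) (Cpow C r p s (t + 1)) := by
  refine disjoint_right.mpr fun c hc hmem => ?_
  have hdvd : p s ^ (t + 1) ∣ c.2 := (mem_filter.mp hc).2.1
  simp only [lowerCs, Cpow, mem_union, mem_biUnion, mem_filter, mem_Ico, mem_Icc,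
    mem_Ioc] at hmem
  rcases hmem with ⟨i, ⟨-, his⟩, j, -, -, -, -, hk⟩ | ⟨j, ⟨-, hjt⟩, -, -, hnj, -⟩
  · exact hk s ⟨his, hsr⟩ ((dvd_pow_self _ t.succ_ne_zero).trans hdvd)
  · exact hnj ((pow_dvd_pow _ (by omega)).trans hdvd)

theorem dvd_of_mem_Cpow (hprime : ∀ i ∈ Icc 1 r, (p i).Prime)
    (hmod : ∀ c ∈ C, 1 < c.2 ∧ c.2 ∣ ∏ i ∈ Icc 1 r, p i ^ α i) {i j : ℕ} (hi : i ∈ Icc 1 r)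
    {c : ℕ × ℕ} (hc : c ∈ Cpow C r p i j) : c.2 ∣ (∏ l ∈ Ico 1 i, p l ^ α l) * p i ^ j := by
  obtain ⟨hcC, -, hnj, hk⟩ := mem_filter.mp hc
  obtain ⟨hi1, hir⟩ := mem_Icc.mp hi
  have hsplit : ∏ l ∈ Icc 1 r, p l ^ α l =
      (∏ l ∈ Ico 1 i, p l ^ α l) * p i ^ α i * ∏ l ∈ Ioc i r, p l ^ α l := by
    rw [← Ico_add_one_right_eq_Icc, ← Ico_add_one_add_one_eq_Ioc,
      ← prod_Ico_consecutive _ (by omega : 1 ≤ i + 1) (by omega : i + 1 ≤ r + 1),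
      prod_Ico_succ_top hi1]
  have hcop : Nat.Coprime c.2 (∏ l ∈ Ioc i r, p l ^ α l) := by
    refine Nat.Coprime.prod_right fun k hk' => Nat.Coprime.pow_right _ (Nat.Coprime.symm ?_)
    obtain ⟨hik, hkr⟩ := mem_Ioc.mp hk'
    exact (hprime k (mem_Icc.mpr ⟨by omega, hkr⟩)).coprime_iff_not_dvd.mpr (hk k hk')
  exact Nat.dvd_mul_pow_of_not_pow_succ_dvd (hprime i hi) (zero_lt_one.trans (hmod c hcC).1).ne'
    (hcop.dvd_of_dvd_mul_right (hsplit ▸ (hmod c hcC).2)) hnj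

theorem dvd_of_mem_lowerCs (hprime : ∀ i ∈ Icc 1 r, (p i).Prime)
    (hmod : ∀ c ∈ C, 1 < c.2 ∧ c.2 ∣ ∏ i ∈ Icc 1 r, p i ^ α i) (hs : s ∈ Icc 1 r)
    {c : ℕ × ℕ} (hc : c ∈ lowerCs C r p α s t) : c.2 ∣ (∏ i ∈ Ico 1 s, p i ^ α i) * p s ^ t := by
  obtain ⟨hs1, hsr⟩ := mem_Icc.mp hs
  simp only [lowerCs, mem_union, mem_biUnion, mem_Ico, mem_Icc] at hc
  rcases hc with ⟨i, ⟨hi1, his⟩, j, ⟨-, hj⟩, hc⟩ | ⟨j, ⟨-, hj⟩, hc⟩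
  · refine (dvd_of_mem_Cpow hprime hmod (mem_Icc.mpr ⟨hi1, by omega⟩) hc).trans
      (Dvd.dvd.mul_right ?_ _)
    rw [← prod_Ico_consecutive _ hi1 his.le]
    exact mul_dvd_mul_left _ ((pow_dvd_pow _ hj).trans
      (dvd_prod_of_mem _ (mem_Ico.mpr ⟨le_rfl, his⟩)))
  · exact (dvd_of_mem_Cpow hprime hmod hs hc).trans (mul_dvd_mul_left _ (pow_dvd_pow _ hj))

end Layers

theorem not_dvd_prod_Ico_of_strictMonoOn {r : ℕ} {p : ℕ → ℕ} (α : ℕ → ℕ)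
    (hprime : ∀ i ∈ Icc 1 r, (p i).Prime) (hsm : StrictMonoOn p (Set.Icc 1 r))
    {s : ℕ} (hs : s ∈ Icc 1 r) : ¬ p s ∣ ∏ i ∈ Ico 1 s, p i ^ α i := by
  intro hdvd
  obtain ⟨i, hi, hdi⟩ := (hprime s hs).prime.exists_mem_finset_dvd hdvd
  obtain ⟨hi1, his⟩ := mem_Ico.mp hi
  have hir : i ≤ r := his.le.trans (mem_Icc.mp hs).2
  have hsi : p s = p i := (Nat.prime_dvd_prime_iff_eq (hprime s hs)
    (hprime i (mem_Icc.mpr ⟨hi1, hir⟩))).mp ((hprime s hs).dvd_of_dvd_pow hdi)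
  exact (hsm ⟨hi1, hir⟩ (mem_Icc.mp hs) his).ne hsi.symm

theorem lambda_step_same_prime_general
    (r : ℕ) (p α : ℕ → ℕ)
    (hprime : ∀ i ∈ Finset.Icc 1 r, (p i).Prime)
    (hmono : ∀ i, 1 ≤ i → i < r → p i < p (i + 1))
    (C : Finset (ℕ × ℕ))
    (hcov : CoversAll C)
    (hmod : ∀ c ∈ C, 1 < c.2 ∧ c.2 ∣ ∏ i ∈ Finset.Icc 1 r, p i ^ α i)
    (hmin : ∀ D ⊂ C, ¬ CoversAll D)
    (s t : ℕ) (hs1 : 1 ≤ s) (hsr : s ≤ r)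
    (hlam : lam C r p α s t = 1) :
    lam C r p α s (t + 1) = p s - (Cpow C r p s (t + 1)).card := by
  have hs : s ∈ Icc 1 r := mem_Icc.mpr ⟨hs1, hsr⟩
  have hps : (p s).Prime := hprime s hs
  have hsm : StrictMonoOn p (Set.Icc 1 r) := strictMonoOn_of_lt_add_one Set.ordConnected_Icc
    fun i _ hi hi1 => hmono i hi.1 (Nat.lt_of_succ_le hi1.2)
  set P := ∏ i ∈ Ico 1 s, p i ^ α i
  have hP : ¬ p s ∣ P := not_dvd_prod_Ico_of_strictMonoOn α hprime hsm hs
  have hM : 0 < P * p s ^ t :=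
    Nat.pos_of_ne_zero (mul_ne_zero (fun h => hP (h ▸ dvd_zero _)) (pow_ne_zero t hps.ne_zero))
  have hsub : lowerCs C r p α s t ∪ Cpow C r p s (t + 1) ⊆ C := lowerCs_succ ▸ lowerCs_subset
  rw [lam, lowerCs_succ, pow_succ, ← mul_assoc]
  refine card_filter_avoids_union hM (fun c hc => dvd_of_mem_lowerCs hprime hmod hs hc)
    (fun c hc => mul_assoc P _ _ ▸ pow_succ (p s) t ▸ dvd_of_mem_Cpow hprime hmod hs hc)
    (disjoint_lowerCs_Cpow_succ hsr)
    (fun c hc d hd0 hdp => hps.not_dvd_mul_of_pow_succ_dvd hP (mem_filter.mp hc).2.1 hd0 hdp)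
    hlam fun c hc => ?_
  obtain ⟨n, hnc, hn⟩ := hcov.exists_private hmin (fun c hc => zero_lt_one.trans (hmod c hc).1)
    (hsub (mem_union_right _ hc))
  exact ⟨n, hnc, fun c' hc' => hn c' (hsub hc')⟩

theorem lambda_step_same_prime
    (r : ℕ) (hr : 2 ≤ r) (p α : ℕ → ℕ)
    (hprime : ∀ i ∈ Finset.Icc 1 r, (p i).Prime)
    (hmono : ∀ i, 1 ≤ i → i < r → p i < p (i + 1))
    (hp1 : p 1 = 2)
    (hcong : ∀ t, 1 ≤ t → t ≤ r - 2 → p (t + 1) % (p t - 1) = 1)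
    (hlast : (p (r - 1) - 2) * (p (r - 1) - 3) ≤ p r)
    (hα : ∀ i, 1 ≤ i → i ≤ r - 2 → α i = (p (i + 1) - 1) / (p i - 1) - 1)
    (hαpenult : α (r - 1) = (p r - 1) / (p (r - 1) - 1))
    (hαlast : α r = 1)
    (C : Finset (ℕ × ℕ))
    (hcov : CoversAll C) (hdist : DistinctModuli C)
    (hmod : ∀ c ∈ C, 1 < c.2 ∧ c.2 ∣ ∏ i ∈ Finset.Icc 1 r, p i ^ α i)
    (hlcm : (C.image Prod.snd).lcm id = ∏ i ∈ Finset.Icc 1 r, p i ^ α i)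
    (hmin : ∀ D ⊂ C, ¬ CoversAll D)
    (s t : ℕ) (hs1 : 1 ≤ s) (hsr : s ≤ r)
    (hlam : lam C r p α s t = 1) (ht0 : 0 < t) (ht : t < α s) :
    lam C r p α s (t + 1) = p s - (Cpow C r p s (t + 1)).card :=
  lambda_step_same_prime_general r p α hprime hmono C hcov hmod hmin s t hs1 hsr hlam
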